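/- arXiv:2010.06457 — 3 statements merged into one kernel-verified Lean document; each statement's English description precedes it below -/
import Mathlib

section
/- Let n be odd, a ∈ Z_n with shares a0, a1 ∈ {0,...,n−1} such that a0 + a1 ≡ a (mod n). Define DReLU(a) = 1 iff a < ⌈n/2⌉ (for the canonical representative a ∈ {0,...,n−1}). Then DReLU(a) = 1 if and only if the integer a0 + a1 lies in [0, ⌈n/2⌉) ∪ [n, n + ⌈n/2⌉). -/
theorem Nat.mod_lt_iff_of_lt_two_mul {s n c : ℕ} (hs : s < 2 * n) :
    s % n < c ↔ s < c ∨ n ≤ s ∧ s < n + c := by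
  rcases lt_or_ge s n with h | h
  · rw [Nat.mod_eq_of_lt h]
    omega
  · rw [Nat.mod_eq_sub_mod h, Nat.mod_eq_of_lt (by omega)]
    omega

theorem drelu_ring_characterization_general (n a a0 a1 : ℕ)
    (ha0 : a0 < n) (ha1 : a1 < n) (ha : a = (a0 + a1) % n) :
    a < (n + 1) / 2 ↔
      (a0 + a1 < (n + 1) / 2 ∨ (n ≤ a0 + a1 ∧ a0 + a1 < n + (n + 1) / 2)) := by
  subst ha
  exact Nat.mod_lt_iff_of_lt_two_mul (by omega)

/-- For odd `n` and shares `a0, a1` of `a` over `Z_n`,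
`DReLU(a) = 1` (i.e. `a < ⌈n/2⌉`) iff the integer `a0 + a1` lies in
`[0, ⌈n/2⌉) ∪ [n, n + ⌈n/2⌉)`. -/
theorem drelu_ring_characterization (n a a0 a1 : ℕ) (hodd : Odd n)
    (ha0 : a0 < n) (ha1 : a1 < n) (ha : a = (a0 + a1) % n) :
    a < (n + 1) / 2 ↔
      (a0 + a1 < (n + 1) / 2 ∨ (n ≤ a0 + a1 ∧ a0 + a1 < n + (n + 1) / 2)) :=
  drelu_ring_characterization_general n a a0 a1 ha0 ha1 ha
end

section
/- (Truncation theorem) Let ℓ > s ≥ 0, L = 2^ℓ, and a0, a1 ∈ {0,...,L−1} with a = (a0 + a1) mod L. Write a_b = a_b^1·2^s + a_b^0 with 0 ≤ a_b^0 < 2^s for b ∈ {0,1}, and a = a^1·2^s + a^0 with 0 ≤ a^0 < 2^s. Let n' = 2^{ℓ−1} and corr = −1 if (a ≥ n') ∧ (a0 < n') ∧ (a1 < n'), corr = 1 if (a < n') ∧ (a0 ≥ n') ∧ (a1 ≥ n'), and corr = 0 otherwise. Then (a0 ≫ s) + (a1 ≫ s) + corr·2^{ℓ−s} + 1[a0^0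 + a1^0 ≥ 2^s] ≡ (a ≫ s) (mod 2^ℓ), where x ≫ s denotes arithmetic right shift of the ℓ-bit two's-complement value, i.e., x ≫ s = ⌊(x − 1[x ≥ 2^{ℓ−1}]·2^ℓ)/2^s⌋ mod 2^ℓ. -/
/-! The truncation error of the shares comes from two sources. Reading `ℓ`-bit words as signed
integers, `a = a0 + a1 mod 2^ℓ` lifts to the exact identity `signed a = signed a0 + signed a1 +
corr·2^ℓ`, the correction accounting for a signed overflow. Dividing this identity by `2^s`, the
term `corr·2^ℓ` contributes exactly `corr·2^(ℓ-s)`, and the floors of the two summands lose at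
most one carry, which is read off the low `s` bits `a0 mod 2^s` and `a1 mod 2^s` because the
signed reading changes a word by a multiple of `2^ℓ`. -/

/-- Arithmetic right shift by `s` of the `ℓ`-bit two's-complement value `x`:
`x ≫ s = ⌊(x - 1[x ≥ 2^(ℓ-1)]·2^ℓ)/2^s⌋ mod 2^ℓ`. -/
def arshift (ℓ s : ℕ) (x : ℤ) : ℤ :=
  Int.fdiv (x - (if 2 ^ (ℓ - 1) ≤ x then (2 : ℤ) ^ ℓ else 0)) (2 ^ s) % 2 ^ ℓ

theorem Int.add_add_mul_ediv (u v k : ℤ) {M : ℤ} (hM : 0 < M) :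
    (u + v + k * M) / M = u / M + v / M + k + if M ≤ u % M + v % M then 1 else 0 := by
  rw [Int.add_mul_ediv_right _ _ hM.ne', Int.add_ediv hM.ne', Int.natAbs_of_nonneg hM.le,
    Int.sign_eq_one_of_pos hM]
  ring

/-- The integer in `[-2^(ℓ-1), 2^(ℓ-1))` represented by the `ℓ`-bit word `x ∈ [0, 2^ℓ)`. -/
def toSigned (ℓ : ℕ) (x : ℤ) : ℤ :=
  x - if 2 ^ (ℓ - 1) ≤ x then 2 ^ ℓ else 0

theorem arshift_modEq_toSigned_ediv (ℓ s : ℕ) (x : ℤ) :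
    arshift ℓ s x ≡ toSigned ℓ x / 2 ^ s [ZMOD 2 ^ ℓ] := by
  rw [arshift, Int.fdiv_eq_ediv_of_nonneg _ (by positivity)]
  exact Int.mod_modEq _ _

theorem toSigned_modEq_two_pow {ℓ s : ℕ} (hs : s ≤ ℓ) (x : ℤ) :
    toSigned ℓ x ≡ x [ZMOD 2 ^ s] := by
  rw [Int.modEq_iff_dvd, toSigned, sub_sub_cancel]
  split_ifs
  · exact pow_dvd_pow 2 hs
  · exact dvd_zero _

theorem toSigned_add {ℓ : ℕ} (hℓ : 0 < ℓ) {a0 a1 : ℤ}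
    (ha0 : 0 ≤ a0) (ha0' : a0 < 2 ^ ℓ) (ha1 : 0 ≤ a1) (ha1' : a1 < 2 ^ ℓ) :
    toSigned ℓ ((a0 + a1) % 2 ^ ℓ) = toSigned ℓ a0 + toSigned ℓ a1 +
      (if 2 ^ (ℓ - 1) ≤ (a0 + a1) % 2 ^ ℓ ∧ a0 < 2 ^ (ℓ - 1) ∧ a1 < 2 ^ (ℓ - 1) then -1
        else if (a0 + a1) % 2 ^ ℓ < 2 ^ (ℓ - 1) ∧ 2 ^ (ℓ - 1) ≤ a0 ∧ 2 ^ (ℓ - 1) ≤ a1 then 1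
        else 0) * 2 ^ ℓ := by
  have hwrap : a0 + a1 < 2 ^ ℓ ∧ (a0 + a1) % 2 ^ ℓ = a0 + a1 ∨
      2 ^ ℓ ≤ a0 + a1 ∧ (a0 + a1) % 2 ^ ℓ = a0 + a1 - 2 ^ ℓ := by
    by_cases h : a0 + a1 < 2 ^ ℓ
    · exact .inl ⟨h, Int.emod_eq_of_lt (by omega) h⟩
    · refine .inr ⟨by omega, ?_⟩
      rw [← Int.sub_emod_right, Int.emod_eq_of_lt (by omega) (by omega)]
  have hhalf : (2 : ℤ) ^ ℓ = 2 * 2 ^ (ℓ - 1) := by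
    rw [← pow_succ', Nat.sub_add_cancel hℓ]
  unfold toSigned
  generalize (a0 + a1) % 2 ^ ℓ = a at hwrap ⊢
  rw [hhalf] at ha0' ha1' hwrap ⊢
  generalize (2 : ℤ) ^ (ℓ - 1) = n' at *
  split_ifs <;> omega

/-- Truncation theorem: `(a0 ≫ s) + (a1 ≫ s) + corr·2^(ℓ-s) +
1[a0^0 + a1^0 ≥ 2^s] ≡ (a ≫ s) (mod 2^ℓ)`. -/
theorem truncation_theorem (ℓ s : ℕ) (a a0 a1 corr : ℤ) (hs : s < ℓ)
    (ha0 : 0 ≤ a0) (ha0' : a0 < 2 ^ ℓ)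
    (ha1 : 0 ≤ a1) (ha1' : a1 < 2 ^ ℓ)
    (ha : a = (a0 + a1) % 2 ^ ℓ)
    (hcorr : corr =
      if 2 ^ (ℓ - 1) ≤ a ∧ a0 < 2 ^ (ℓ - 1) ∧ a1 < 2 ^ (ℓ - 1) then -1
      else if a < 2 ^ (ℓ - 1) ∧ 2 ^ (ℓ - 1) ≤ a0 ∧ 2 ^ (ℓ - 1) ≤ a1 then 1
      else 0) :
    Int.ModEq (2 ^ ℓ)
      (arshift ℓ s a0 + arshift ℓ s a1 + corr * 2 ^ (ℓ - s) +
        (if 2 ^ s ≤ a0 % 2 ^ s + a1 % 2 ^ s then 1 else 0))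
      (arshift ℓ s a) := by
  have hsigned :
      toSigned ℓ a = toSigned ℓ a0 + toSigned ℓ a1 + corr * 2 ^ (ℓ - s) * 2 ^ s := by
    rw [mul_assoc, ← pow_add, Nat.sub_add_cancel hs.le, hcorr, ha]
    exact toSigned_add (by omega) ha0 ha0' ha1 ha1'
  calc arshift ℓ s a0 + arshift ℓ s a1 + corr * 2 ^ (ℓ - s) +
        (if 2 ^ s ≤ a0 % 2 ^ s + a1 % 2 ^ s then 1 else 0)
      ≡ toSigned ℓ a0 / 2 ^ s + toSigned ℓ a1 / 2 ^ s + corr * 2 ^ (ℓ - s) +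
        (if 2 ^ s ≤ a0 % 2 ^ s + a1 % 2 ^ s then 1 else 0) [ZMOD 2 ^ ℓ] :=
        (((arshift_modEq_toSigned_ediv ℓ s a0).add
          (arshift_modEq_toSigned_ediv ℓ s a1)).add_right _).add_right _
    _ = toSigned ℓ a / 2 ^ s := by
        rw [hsigned, Int.add_add_mul_ediv _ _ _ (by positivity),
          toSigned_modEq_two_pow hs.le a0, toSigned_modEq_two_pow hs.le a1]
    _ ≡ arshift ℓ s a [ZMOD 2 ^ ℓ] := (arshift_modEq_toSigned_ediv ℓ s a).symm
end

section
/- (Division theorem) Let n = n^1·d + n^0 with 0 ≤ n^0 < d < n, and let n' = ⌈n/2⌉. Define rdiv(a, d) = idiv(a − 1[a ≥ n']·n, d) mod n for a ∈ {0,...,n−1}, where idiv is integer division rounding toward −∞. Let a0, a1 ∈ {0,...,n−1} with a = (a0 + a1) mod n. Write a_b = a_b^1·d + a_b^0 with 0 ≤ a_b^0 < d. Define corr = −1 if (a ≥ n') ∧ (a0 < n') ∧ (a1 < n'), corr = 1 if (a < n') ∧ (a0 ≥ n') ∧ (a1 ≥ n'), else corr = 0. Define A = a0^0 + a1^0 −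 (1[a0 ≥ n'] + 1[a1 ≥ n'] − corr)·n^0, B = idiv(a0^0 − 1[a0 ≥ n']·n^0, d) + idiv(a1^0 − 1[a1 ≥ n']·n^0, d), and C = 1[A < d] + 1[A < 0] + 1[A < −d]. Then rdiv(a0, d) + rdiv(a1, d) + (corr·n^1 + 1 − C − B) ≡ rdiv(a, d) (mod n). -/
/-!
With `s(x) = x - 1[x ≥ n']·n`, the representative of `x` in `[n' - n, n')`, we have
`rdiv(x, d) = ⌊s(x)/d⌋ mod n`. As `n ≤ 2n' ≤ n + 1`, two summands below `n'` never wrap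
around `n` and two summands from `n'` on always do, which makes `s(a) = s(a0) + s(a1) + corr·n`
hold in `ℤ`. Splitting `a_b = a_b^1·d + a_b^0` and `n = n^1·d + n^0` and pulling the multiples
of `d` out of the floors turns `⌊s(a)/d⌋ - ⌊s(a0)/d⌋ - ⌊s(a1)/d⌋` into `corr·n^1 + ⌊A/d⌋ - B`,
and `-2d < A < 2d` gives `⌊A/d⌋ = 1 - C`. So the congruence is an equality in `ℤ`.
-/

open Int

/-- Division of a ring element by a positive integer:
`rdiv(a, d) = idiv(a - 1[a ≥ n']·n, d) mod n`. -/
def rdiv (n n' d a : ℤ) : ℤ :=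
  Int.fdiv (a - (if n' ≤ a then n else 0)) d % n

def centeredRep (n n' x : ℤ) : ℤ :=
  x - if n' ≤ x then n else 0

def wrapCorrection (n' a a0 a1 : ℤ) : ℤ :=
  if n' ≤ a ∧ a0 < n' ∧ a1 < n' then -1
  else if a < n' ∧ n' ≤ a0 ∧ n' ≤ a1 then 1
  else 0

lemma wrapCorrection_bounds (n' a a0 a1 : ℤ) :
    0 ≤ (if n' ≤ a0 then 1 else 0) + (if n' ≤ a1 then 1 else 0) -
        wrapCorrection n' a a0 a1 ∧
      (if n' ≤ a0 then 1 else 0) + (if n' ≤ a1 then 1 else 0) -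
        wrapCorrection n' a a0 a1 ≤ 2 := by
  unfold wrapCorrection
  split_ifs <;> omega

lemma centeredRep_emod_add {n n' a0 a1 : ℤ} (hn'₁ : n ≤ 2 * n') (hn'₂ : 2 * n' ≤ n + 1)
    (ha0 : 0 ≤ a0) (ha0' : a0 < n) (ha1 : 0 ≤ a1) (ha1' : a1 < n) :
    centeredRep n n' ((a0 + a1) % n) =
      centeredRep n n' a0 + centeredRep n n' a1 +
        wrapCorrection n' ((a0 + a1) % n) a0 a1 * n := by
  have hsum : (a0 + a1) % n = a0 + a1 - if n ≤ a0 + a1 then n else 0 := by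
    split_ifs with h
    · rw [← Int.sub_emod_right, Int.emod_eq_of_lt (by omega) (by omega)]
    · rw [sub_zero, Int.emod_eq_of_lt (by omega) (by omega)]
  unfold centeredRep wrapCorrection
  rw [hsum]
  split_ifs <;> omega

lemma fdiv_sub_mul_of_digits {d n n1 n0 x q r : ℤ} (e : ℤ) (hd : d ≠ 0)
    (hn : n = n1 * d + n0) (hx : x = q * d + r) :
    fdiv (x - e * n) d = fdiv (r - e * n0) d + (q - e * n1) := by
  rw [show x - e * n = (r - e * n0) + (q - e * n1) * d by rw [hn, hx]; ring]
  exact Int.add_mul_fdiv_right _ _ hd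

lemma fdiv_sub_mul_add_sub_mul_add_mul {d n n1 n0 : ℤ} (hd : d ≠ 0) (hn : n = n1 * d + n0)
    (x0 x1 e0 e1 c : ℤ) :
    fdiv (x0 - e0 * n + (x1 - e1 * n) + c * n) d =
      fdiv (x0 - e0 * n) d + fdiv (x1 - e1 * n) d + c * n1 +
        fdiv (x0 % d + x1 % d - (e0 + e1 - c) * n0) d -
        fdiv (x0 % d - e0 * n0) d - fdiv (x1 % d - e1 * n0) d := by
  have hx0 := Int.ediv_mul_add_emod x0 d
  have hx1 := Int.ediv_mul_add_emod x1 d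
  rw [show x0 - e0 * n + (x1 - e1 * n) + c * n = x0 + x1 - (e0 + e1 - c) * n by ring,
    fdiv_sub_mul_of_digits _ hd hn hx0.symm, fdiv_sub_mul_of_digits _ hd hn hx1.symm,
    fdiv_sub_mul_of_digits (q := x0 / d + x1 / d) (r := x0 % d + x1 % d) _ hd hn
      (by linear_combination -hx0 - hx1)]
  ring

lemma fdiv_eq_one_sub_of_bounds {d A : ℤ} (hd : 0 < d) (hA₁ : -(2 * d) ≤ A)
    (hA₂ : A < 2 * d) :
    fdiv A d =
      1 - ((if A < d then 1 else 0) + (if A < 0 then 1 else 0) + (if A < -d then 1 else 0)) := by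
  rw [Int.fdiv_eq_ediv_of_nonneg _ hd.le, Int.ediv_eq_iff_of_pos hd]
  split_ifs <;> omega

theorem division_theorem_general (n n1 n0 n' d a a0 a1 corr A B C : ℤ)
    (hn : n = n1 * d + n0) (hn0 : 0 ≤ n0) (hn0' : n0 < d)
    (hn' : n' = (n + 1) / 2)
    (ha0 : 0 ≤ a0) (ha0' : a0 < n) (ha1 : 0 ≤ a1) (ha1' : a1 < n)
    (ha : a = (a0 + a1) % n)
    (hcorr : corr =
      if n' ≤ a ∧ a0 < n' ∧ a1 < n' then -1
      else if a < n' ∧ n' ≤ a0 ∧ n' ≤ a1 then 1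
      else 0)
    (hA : A = a0 % d + a1 % d -
      ((if n' ≤ a0 then (1 : ℤ) else 0) + (if n' ≤ a1 then 1 else 0) - corr) * n0)
    (hB : B = Int.fdiv (a0 % d - (if n' ≤ a0 then n0 else 0)) d +
      Int.fdiv (a1 % d - (if n' ≤ a1 then n0 else 0)) d)
    (hC : C = (if A < d then (1 : ℤ) else 0) + (if A < 0 then 1 else 0) +
      (if A < -d then 1 else 0)) :
    Int.ModEq n
      (rdiv n n' d a0 + rdiv n n' d a1 + (corr * n1 + 1 - C - B))
      (rdiv n n' d a) := by
  have hd : 0 < d := by omega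
  replace hcorr : corr = wrapCorrection n' a a0 a1 := hcorr
  have hAC : fdiv A d = 1 - C := by
    obtain ⟨hk₀, hk₂⟩ := hcorr ▸ wrapCorrection_bounds n' a a0 a1
    have := Int.emod_nonneg a0 hd.ne'
    have := Int.emod_nonneg a1 hd.ne'
    have := Int.emod_lt_of_pos a0 hd
    have := Int.emod_lt_of_pos a1 hd
    rw [hC]
    exact fdiv_eq_one_sub_of_bounds hd (by nlinarith) (by nlinarith)
  have hexact : fdiv (centeredRep n n' a) d =
      fdiv (centeredRep n n' a0) d + fdiv (centeredRep n n' a1) d + (corr * n1 + 1 - C - B) := by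
    rw [ha, centeredRep_emod_add (n' := n') (by omega) (by omega) ha0 ha0' ha1 ha1', ← ha,
      ← hcorr]
    unfold centeredRep
    rw [← boole_mul (n' ≤ a0) n, ← boole_mul (n' ≤ a1) n,
      fdiv_sub_mul_add_sub_mul_add_mul hd.ne' hn, ← hA, hAC, hB]
    simp only [boole_mul]
    ring
  exact ((Int.mod_modEq _ n).add (Int.mod_modEq _ n)).add_right _ |>.trans
    (hexact ▸ (Int.mod_modEq _ n).symm)

/-- Division theorem:
`rdiv(a0,d) + rdiv(a1,d) + (corr·n^1 + 1 - C - B) ≡ rdiv(a,d) (mod n)`. -/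
theorem division_theorem (n n1 n0 n' d a a0 a1 corr A B C : ℤ)
    (hn : n = n1 * d + n0) (hn0 : 0 ≤ n0) (hn0' : n0 < d) (hdn : d < n)
    (hn' : n' = (n + 1) / 2)
    (ha0 : 0 ≤ a0) (ha0' : a0 < n) (ha1 : 0 ≤ a1) (ha1' : a1 < n)
    (ha : a = (a0 + a1) % n)
    (hcorr : corr =
      if n' ≤ a ∧ a0 < n' ∧ a1 < n' then -1
      else if a < n' ∧ n' ≤ a0 ∧ n' ≤ a1 then 1
      else 0)
    (hA : A = a0 % d + a1 % d -
      ((if n' ≤ a0 then (1 : ℤ) else 0) + (if n' ≤ a1 then 1 else 0) - corr) * n0)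
    (hB : B = Int.fdiv (a0 % d - (if n' ≤ a0 then n0 else 0)) d +
      Int.fdiv (a1 % d - (if n' ≤ a1 then n0 else 0)) d)
    (hC : C = (if A < d then (1 : ℤ) else 0) + (if A < 0 then 1 else 0) +
      (if A < -d then 1 else 0)) :
    Int.ModEq n
      (rdiv n n' d a0 + rdiv n n' d a1 + (corr * n1 + 1 - C - B))
      (rdiv n n' d a) :=
  division_theorem_general n n1 n0 n' d a a0 a1 corr A B C hn hn0 hn0' hn' ha0 ha0' ha1 ha1' ha
    hcorr hA hB hC
end
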